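/- arXiv:1406.1547 — 3 statements merged into one kernel-verified Lean document; each statement's English description precedes it below -/
import Mathlib

section
/- Let G be a simple graph on a vertex type V and E : V → V → ℝ a matrix with E i j = 0 whenever i and j are not adjacent in G. Then E satisfies the additive no-arbitrage condition over all closed walks (for every closed walk v₀, v₁, …, v_t = v₀ in G, ∑_{i<t} E v_i v_{i+1} = 0) if and only if E i j = -E j i for all adjacent i, j and the sum ∑_{i<t} E v_i v_{i+1} vanishes over every cycle (closed walk with no repeated edges and no repeated vertices other than the endpoint) in G. -/
/-- The sum of `E` over the consecutive edge steps of a walk `w` in `G`: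
`∑_{i < length w} E v_i v_{i+1}`. -/
def walkSum {V : Type*} {G : SimpleGraph V} (E : V → V → ℝ) {u v : V} (w : G.Walk u v) : ℝ :=
  ∑ i ∈ Finset.range w.length, E (w.getVert i) (w.getVert (i + 1))

/-- `E` is an additive no-arbitrage matrix over `G`: it vanishes on non-adjacent pairs and
its sum over the steps of every closed walk is zero. -/
def IsNoArbitrage {V : Type*} (G : SimpleGraph V) (E : V → V → ℝ) : Prop :=
  (∀ i j, ¬ G.Adj i j → E i j = 0) ∧ ∀ (v : V) (w : G.Walk v v), walkSum E w = 0

/-!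
Under antisymmetry, a closed walk `u → x ⇝ u` whose return leg `x ⇝ u` is a path has zero sum:
it is either a back-and-forth step along one edge or a cycle. Shortening a walk to a path
(`Walk.bypass`) only ever cuts off closed walks of this shape, so it preserves the sum; and a
closed walk shortens to the trivial walk.
-/

namespace SimpleGraph.Walk

variable {V : Type*} {G : SimpleGraph V} (E : V → V → ℝ)

@[simp]
lemma walkSum_nil (v : V) : walkSum E (nil : G.Walk v v) = 0 := by
  simp [walkSum]

@[simp]
lemma walkSum_cons {u x v : V} (h : G.Adj u x) (p : G.Walk x v) :
    walkSum E (cons h p) = E u x + walkSum E p := by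
  rw [walkSum, length_cons, Finset.sum_range_succ', add_comm]
  simp only [getVert_cons_succ, getVert_zero, walkSum]

lemma walkSum_append {u v w : V} (p : G.Walk u v) (q : G.Walk v w) :
    walkSum E (p.append q) = walkSum E p + walkSum E q := by
  induction p with
  | nil => simp
  | cons h p ih => simp [ih, add_assoc]

variable {E}

lemma walkSum_cons_eq_zero_of_isPath (hA : ∀ i j, G.Adj i j → E i j = - E j i)
    (hC : ∀ (v : V) (w : G.Walk v v), w.IsCycle → walkSum E w = 0)
    {u x : V} (h : G.Adj u x) {p : G.Walk x u} (hp : p.IsPath) : walkSum E (cons h p) = 0 := by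
  by_cases hlen : 2 ≤ p.length
  · refine hC u _ (isCycle_iff_isPath_tail_and_le_length.mpr ⟨?_, ?_⟩)
    · simpa using hp
    · simp only [length_cons]; omega
  · cases p with
    | nil => exact absurd h (G.irrefl)
    | cons _ q =>
      cases q with
      | nil => simp [hA u x h]
      | cons _ _ => simp at hlen

lemma walkSum_bypass [DecidableEq V] (hA : ∀ i j, G.Adj i j → E i j = - E j i)
    (hC : ∀ (v : V) (w : G.Walk v v), w.IsCycle → walkSum E w = 0)
    {u v : V} (w : G.Walk u v) :
    walkSum E w.bypass = walkSum E w := by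
  induction w with
  | nil => rfl
  | @cons u x v h p ih =>
    rw [bypass]
    split_ifs with hs
    · have hcut : walkSum E (cons h (p.bypass.takeUntil u hs)) = 0 :=
        walkSum_cons_eq_zero_of_isPath hA hC h (p.bypass_isPath.takeUntil hs)
      rw [walkSum_cons] at hcut
      conv_rhs =>
        rw [walkSum_cons, ← ih, ← p.bypass.take_spec hs, walkSum_append, ← add_assoc, hcut,
          zero_add]
    · rw [walkSum_cons, walkSum_cons, ih]

lemma walkSum_eq_zero_of_antisymm_of_isCycle (hA : ∀ i j, G.Adj i j → E i j = - E j i)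
    (hC : ∀ (v : V) (w : G.Walk v v), w.IsCycle → walkSum E w = 0)
    {v : V} (w : G.Walk v v) : walkSum E w = 0 := by
  classical
  rw [← walkSum_bypass hA hC, (isPath_iff_nil.mp w.bypass_isPath).eq_nil, walkSum_nil]

end SimpleGraph.Walk

open SimpleGraph.Walk in
theorem no_arbitrage_iff_antisymm_and_cycles_general {V : Type*} (G : SimpleGraph V)
    (E : V → V → ℝ) :
    (∀ (v : V) (w : G.Walk v v), walkSum E w = 0) ↔
      ((∀ i j, G.Adj i j → E i j = - E j i) ∧
        ∀ (v : V) (w : G.Walk v v), w.IsCycle → walkSum E w = 0) := by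
  refine ⟨fun h => ⟨fun i j hij => ?_, fun v w _ => h v w⟩,
    fun ⟨hA, hC⟩ v w => walkSum_eq_zero_of_antisymm_of_isCycle hA hC w⟩
  have := h i (cons hij (cons hij.symm nil))
  simp only [walkSum_cons, walkSum_nil] at this
  linarith

/-- `E` (vanishing on non-edges) satisfies the additive no-arbitrage condition over all
closed walks iff it is antisymmetric on edges and its sum vanishes over every cycle. -/
theorem no_arbitrage_iff_antisymm_and_cycles {V : Type*} (G : SimpleGraph V)
    (E : V → V → ℝ) (h0 : ∀ i j, ¬ G.Adj i j → E i j = 0) :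
    (∀ (v : V) (w : G.Walk v v), walkSum E w = 0) ↔
      ((∀ i j, G.Adj i j → E i j = - E j i) ∧
        ∀ (v : V) (w : G.Walk v v), w.IsCycle → walkSum E w = 0) :=
  no_arbitrage_iff_antisymm_and_cycles_general G E
end

section
/- Let G be the complete graph on Fin n and fix k : Fin n. For every function a : Fin n → ℝ with a k = 0, there exists a unique additive no-arbitrage matrix E over G such that E k j = a j for all j : Fin n. Hence the off-diagonal entries of the k-th row form a basis for the exchange matrix of the complete graph: fixing them uniquely determines the whole matrix, and every choice of their values is realized by some no-arbitrage matrix. -/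
lemma walkSum_nil {V : Type*} {G : SimpleGraph V} (E : V → V → ℝ) (u : V) :
    walkSum E (SimpleGraph.Walk.nil : G.Walk u u) = 0 := by
  simp [walkSum]

lemma walkSum_cons {V : Type*} {G : SimpleGraph V} (E : V → V → ℝ) {u v w : V}
    (h : G.Adj u v) (p : G.Walk v w) :
    walkSum E (SimpleGraph.Walk.cons h p) = E u v + walkSum E p := by
  unfold walkSum
  rw [SimpleGraph.Walk.length_cons, Finset.sum_range_succ']
  have h0 : E ((SimpleGraph.Walk.cons h p).getVert 0)
      ((SimpleGraph.Walk.cons h p).getVert (0 + 1)) = E u v := by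
    simp [SimpleGraph.Walk.getVert_cons_succ]
  have hsum : ∑ x ∈ Finset.range p.length,
      E ((SimpleGraph.Walk.cons h p).getVert (x + 1))
        ((SimpleGraph.Walk.cons h p).getVert (x + 1 + 1)) =
      ∑ i ∈ Finset.range p.length, E (p.getVert i) (p.getVert (i + 1)) := by
    apply Finset.sum_congr rfl
    intro x _
    rw [SimpleGraph.Walk.getVert_cons_succ, SimpleGraph.Walk.getVert_cons_succ]
  rw [h0, hsum, add_comm]

/-- Over the complete graph on `Fin n`, for each choice of a `k`-th row `a` (with `a k = 0`)
there is a unique additive no-arbitrage matrix having that row: the off-diagonal entries of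
the `k`-th row form a basis for the exchange matrix. -/
theorem no_arbitrage_complete_row_basis (n : ℕ) (k : Fin n)
    (a : Fin n → ℝ) (hak : a k = 0) :
    ∃! E : Fin n → Fin n → ℝ,
      IsNoArbitrage (⊤ : SimpleGraph (Fin n)) E ∧ ∀ j, E k j = a j := by
  set G : SimpleGraph (Fin n) := ⊤ with hG
  refine ⟨fun i j => if i = j then 0 else a j - a i, ⟨⟨?_, ?_⟩, ?_⟩, ?_⟩
  · intro i j hadj
    simp only [hG, SimpleGraph.top_adj, not_not] at hadj
    simp [hadj]
  · intro v w
    have key : ∀ (u v : Fin n) (w : G.Walk u v),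
        walkSum (fun i j => if i = j then 0 else a j - a i) w = a v - a u := by
      intro u v w
      induction w with
      | nil => simp [walkSum_nil]
      | cons h p ih =>
        rw [walkSum_cons]
        have hne : _ ≠ _ := h.ne
        rw [ih, if_neg hne]
        ring
    rw [key]; ring
  · intro j
    by_cases hj : k = j
    · simp [← hj, hak]
    · simp [hj, hak]
  · intro E ⟨⟨hE0, hEw⟩, hrow⟩
    funext i j
    -- general fact: E j k = - E k j for j ≠ k
    have hrev : ∀ j : Fin n, j ≠ k → E j k = - E k j := by
      intro j hjk
      have hadj : G.Adj k j := by simp [hG, Ne.symm hjk]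
      have := hEw k (SimpleGraph.Walk.cons hadj
        (SimpleGraph.Walk.cons hadj.symm SimpleGraph.Walk.nil))
      rw [walkSum_cons, walkSum_cons, walkSum_nil] at this
      linarith
    by_cases hij : i = j
    · subst hij
      have : ¬ G.Adj i i := by simp
      simp [hE0 i i this]
    · by_cases hik : i = k
      · subst hik
        rw [hrow j, if_neg hij, hak]; ring
      · by_cases hjk : j = k
        · subst hjk
          rw [hrev i hik, hrow i]
          simp [if_neg hij, hak]
        · have h1 : G.Adj k i := by simp [hG, Ne.symm hik]
          have h2 : G.Adj i j := by simp [hG, hij]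
          have h3 : G.Adj j k := by simp [hG, hjk]
          have := hEw k (SimpleGraph.Walk.cons h1 (SimpleGraph.Walk.cons h2
            (SimpleGraph.Walk.cons h3 SimpleGraph.Walk.nil)))
          rw [walkSum_cons, walkSum_cons, walkSum_cons, walkSum_nil] at this
          have h4 := hrev j hjk
          rw [hrow i, hrow j] at *
          simp [if_neg hij]
          linarith
end

section
/- Let G be a connected simple graph on a finite vertex type V and let E : V → V → ℝ be a matrix with E i j = 0 whenever i and j are not adjacent in G. Then E is an additive no-arbitrage matrix over G if and only if there exists a function f : V → ℝ such that E i j = f j - f i for every pair of adjacent vertices i, j. That is, an exchange ensemble over a connected graph is arbitrage-free exactly when its rates arise as trivial cross-rates of a single valuation of the goods. -/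
lemma walkSum_append {V : Type*} {G : SimpleGraph V} (E : V → V → ℝ) {u v w : V}
    (p : G.Walk u v) (q : G.Walk v w) :
    walkSum E (p.append q) = walkSum E p + walkSum E q := by
  induction p with
  | nil => simp [walkSum_nil]
  | cons h p ih => simp [SimpleGraph.Walk.cons_append, walkSum_cons, ih, add_assoc]

lemma walkSum_reverse {V : Type*} {G : SimpleGraph V} (E : V → V → ℝ)
    (hanti : ∀ i j, G.Adj i j → E j i = -E i j) {u v : V} (p : G.Walk u v) :
    walkSum E p.reverse = -walkSum E p := by
  induction p with
  | nil => simp [walkSum_nil]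
  | cons h p ih =>
    rw [SimpleGraph.Walk.reverse_cons, walkSum_append, ih, walkSum_cons, walkSum_cons,
      walkSum_nil, hanti _ _ h]
    ring

lemma walkSum_telescope {V : Type*} {G : SimpleGraph V} (E : V → V → ℝ) (f : V → ℝ)
    (hf : ∀ i j, G.Adj i j → E i j = f j - f i) {u v : V} (w : G.Walk u v) :
    walkSum E w = f v - f u := by
  unfold walkSum
  have : ∀ i ∈ Finset.range w.length,
      E (w.getVert i) (w.getVert (i + 1)) = f (w.getVert (i + 1)) - f (w.getVert i) := by
    intro i hi
    exact hf _ _ (w.adj_getVert_succ (Finset.mem_range.mp hi))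
  rw [Finset.sum_congr rfl this, Finset.sum_range_sub (fun i => f (w.getVert i))]
  simp

/-- Over a connected graph, a matrix vanishing on non-edges is an additive no-arbitrage
matrix iff its entries on edges arise as cross-rates `E i j = f j - f i` of a single
valuation `f` of the goods. -/
theorem no_arbitrage_iff_potential {V : Type*} [Fintype V] (G : SimpleGraph V)
    (hG : G.Connected) (E : V → V → ℝ) (h0 : ∀ i j, ¬ G.Adj i j → E i j = 0) :
    IsNoArbitrage G E ↔ ∃ f : V → ℝ, ∀ i j, G.Adj i j → E i j = f j - f i := by
  constructor
  · rintro ⟨-, hz⟩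
    have hanti : ∀ i j, G.Adj i j → E j i = -E i j := by
      intro i j h
      have := hz i (SimpleGraph.Walk.cons h (SimpleGraph.Walk.cons h.symm SimpleGraph.Walk.nil))
      rw [walkSum_cons, walkSum_cons, walkSum_nil] at this
      linarith
    obtain ⟨v₀⟩ := hG.nonempty
    refine ⟨fun v => walkSum E ((hG.preconnected v₀ v).some), ?_⟩
    intro i j hij
    set pi := (hG.preconnected v₀ i).some
    set pj := (hG.preconnected v₀ j).some
    have := hz v₀ ((pi.append (SimpleGraph.Walk.cons hij SimpleGraph.Walk.nil)).append pj.reverse)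
    rw [walkSum_append, walkSum_append, walkSum_cons, walkSum_nil,
      walkSum_reverse E hanti] at this
    linarith
  · rintro ⟨f, hf⟩
    refine ⟨h0, fun v w => ?_⟩
    rw [walkSum_telescope E f hf]
    ring
end
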